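/- arXiv:1211.0354 — 2 statements merged into one kernel-verified Lean document; each statement's English description precedes it below -/
import Mathlib

section
/- Let Q = (q₀, q₁, …, qₙ) be an open polygonal curve in ℝ³ with all consecutive vertices distinct, and let Π be the plane through q₀ normal to the first segment q₁ - q₀. If the total curvature of Q is strictly less than π/2, then Π intersects Q only at the point q₀. -/
/-!
By the triangle inequality for angles, the direction of every segment of `Q` makes with the
first segment `q 1 - q 0` an angle of at most the total curvature, hence less than `π / 2`.
So the height `⟪x - q 0, q 1 - q 0⟫` increases strictly along `Q`, and vanishes only at `q 0`.
-/

open Real InnerProductGeometry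

/-- The piecewise linear path through the points `q 0, q 1, q 2, …`. -/
noncomputable def plPath (q : ℕ → EuclideanSpace ℝ (Fin 3)) (t : ℝ) :
    EuclideanSpace ℝ (Fin 3) :=
  q ⌊t⌋₊ + (t - ⌊t⌋₊) • (q (⌊t⌋₊ + 1) - q ⌊t⌋₊)

open scoped InnerProductSpace

section Polygon

variable {V : Type*} [NormedAddCommGroup V] [InnerProductSpace ℝ V]

theorem InnerProductGeometry.inner_pos_of_angle_lt_pi_div_two {x y : V}
    (h : angle x y < π / 2) : 0 < ⟪x, y⟫_ℝ := by
  have hdiv : 0 < ⟪x, y⟫_ℝ / (‖x‖ * ‖y‖) := arccos_lt_pi_div_two.1 h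
  exact pos_of_mul_pos_left hdiv (inv_nonneg.2 (by positivity))

noncomputable def exteriorAngle (q : ℕ → V) (m : ℕ) : ℝ :=
  angle (q (m + 1) - q m) (q m - q (m - 1))

theorem angle_sub_le_sum_exteriorAngle (q : ℕ → V) (h01 : q 0 ≠ q 1) (m : ℕ) :
    angle (q (m + 1) - q m) (q 1 - q 0) ≤ ∑ k ∈ Finset.Ico 1 (m + 1), exteriorAngle q k := by
  induction m with
  | zero => simp [angle_self (sub_ne_zero.2 h01.symm)]
  | succ m ih =>
    rw [Finset.sum_Ico_succ_top (by omega)]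
    calc angle (q (m + 2) - q (m + 1)) (q 1 - q 0)
        ≤ exteriorAngle q (m + 1) + angle (q (m + 1) - q m) (q 1 - q 0) :=
          angle_le_angle_add_angle _ _ _
      _ ≤ _ := by linarith

theorem inner_sub_pos_of_sum_exteriorAngle_lt {n : ℕ} {q : ℕ → V} (h01 : q 0 ≠ q 1)
    (htc : ∑ k ∈ Finset.Ico 1 n, exteriorAngle q k < π / 2) {m : ℕ} (hm : m < n) :
    0 < ⟪q (m + 1) - q m, q 1 - q 0⟫_ℝ :=
  inner_pos_of_angle_lt_pi_div_two <| calc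
    angle (q (m + 1) - q m) (q 1 - q 0)
        ≤ ∑ k ∈ Finset.Ico 1 (m + 1), exteriorAngle q k :=
          angle_sub_le_sum_exteriorAngle q h01 m
    _ ≤ ∑ k ∈ Finset.Ico 1 n, exteriorAngle q k :=
        Finset.sum_le_sum_of_subset_of_nonneg (Finset.Ico_subset_Ico_right hm)
          fun _ _ _ => angle_nonneg _ _
    _ < π / 2 := htc

theorem inner_sub_pos_of_inner_segment_pos {n : ℕ} {q : ℕ → V} {v : V}
    (hseg : ∀ k < n, 0 < ⟪q (k + 1) - q k, v⟫_ℝ) {m : ℕ} (hm0 : 0 < m) (hmn : m ≤ n) :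
    0 < ⟪q m - q 0, v⟫_ℝ := by
  rw [← Finset.sum_range_sub, sum_inner]
  exact Finset.sum_pos (fun k hk => hseg k ((Finset.mem_range.1 hk).trans_le hmn))
    ⟨0, Finset.mem_range.2 hm0⟩

end Polygon

theorem inner_plPath_sub_pos {n : ℕ} {q : ℕ → EuclideanSpace ℝ (Fin 3)}
    {v : EuclideanSpace ℝ (Fin 3)} (hseg : ∀ k < n, 0 < ⟪q (k + 1) - q k, v⟫_ℝ) {t : ℝ}
    (ht0 : 0 < t) (htn : t ≤ n) : 0 < ⟪plPath q t - q 0, v⟫_ℝ := by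
  obtain ⟨m, hm⟩ : ∃ m, ⌊t⌋₊ = m := ⟨_, rfl⟩
  have hmt : (m : ℝ) ≤ t := hm ▸ Nat.floor_le ht0.le
  have hmn : m ≤ n := hm ▸ Nat.floor_le_of_le htn
  have hpath : plPath q t - q 0 = (q m - q 0) + (t - m) • (q (m + 1) - q m) := by
    rw [plPath, hm]
    abel
  rw [hpath, inner_add_left, real_inner_smul_left]
  rcases Nat.eq_zero_or_pos m with rfl | hm0
  · have hn : 0 < n := by exact_mod_cast ht0.trans_le htn
    simpa using mul_pos ht0 (hseg 0 hn)
  · have hstep : 0 ≤ (t - m) * ⟪q (m + 1) - q m, v⟫_ℝ := by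
      rcases hmn.lt_or_eq with hlt | rfl
      · exact mul_nonneg (sub_nonneg.2 hmt) (hseg m hlt).le
      · simp [le_antisymm htn hmt]
    linarith [inner_sub_pos_of_inner_segment_pos hseg hm0 hmn]

/-- If an open polygonal curve `Q = (q 0, …, q n)` with all consecutive vertices distinct
has total curvature strictly less than `π/2`, then the plane through `q 0` normal to the
first segment `q 1 - q 0` intersects `Q` only at the point `q 0`. -/
theorem normal_plane_meets_polygon_once (n : ℕ) (hn : 1 ≤ n)
    (q : ℕ → EuclideanSpace ℝ (Fin 3))
    (hcons : ∀ j < n, q j ≠ q (j + 1))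
    (htc : ∑ m ∈ Finset.Ico 1 n,
      InnerProductGeometry.angle (q (m + 1) - q m) (q m - q (m - 1)) < Real.pi / 2) :
    (plPath q '' Set.Icc (0 : ℝ) n) ∩
      {x : EuclideanSpace ℝ (Fin 3) | (inner ℝ (x - q 0) (q 1 - q 0) : ℝ) = 0} = {q 0} := by
  have hseg : ∀ k < n, 0 < ⟪q (k + 1) - q k, q 1 - q 0⟫_ℝ :=
    fun _ => inner_sub_pos_of_sum_exteriorAngle_lt (hcons 0 hn) htc
  refine Set.eq_singleton_iff_unique_mem.2
    ⟨⟨⟨0, ⟨le_rfl, n.cast_nonneg⟩, by simp [plPath]⟩, by simp⟩, ?_⟩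
  rintro _ ⟨⟨t, ⟨ht0, htn⟩, rfl⟩, hperp⟩
  rcases ht0.eq_or_lt with rfl | ht0
  · simp [plPath]
  · exact absurd hperp (inner_plPath_sub_pos hseg ht0 htn).ne'
end

section
/- Under de Casteljau subdivision at parameter 1/2, the maximum distance between consecutive control points is at most halved: if q₀,…,qₙ are the control points of either half produced by subdividing p₀,…,pₙ ∈ ℝ³ at t = 1/2, then max_j ‖q_{j+1} - qⱼ‖ ≤ (1/2)·max_j ‖p_{j+1} - pⱼ‖. -/
/-!
Every control point of level `r + 1` is the midpoint of two consecutive points of level `r`, so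
an edge of level `r + 1` is the average of two edges of level `r`; by induction no edge of any
level is longer than the longest original edge `M`. The edges of either half are half-edges of
some level (`p^{j+1}_0 - p^j_0 = (p^j_1 - p^j_0)/2`, and similarly on the right), hence at most
`M / 2`.
-/

open Real

/-- The de Casteljau scheme at parameter `1/2` for control points in ℝ³. -/
noncomputable def deCasteljau (p : ℕ → EuclideanSpace ℝ (Fin 3)) :
    ℕ → ℕ → EuclideanSpace ℝ (Fin 3)
  | 0, j => p j
  | r + 1, j => ((2 : ℝ)⁻¹) • (deCasteljau p r j + deCasteljau p r (j + 1))

namespace deCasteljau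

variable (p : ℕ → EuclideanSpace ℝ (Fin 3))

lemma succ_sub_succ (r j : ℕ) :
    deCasteljau p (r + 1) (j + 1) - deCasteljau p (r + 1) j =
      (2 : ℝ)⁻¹ • ((deCasteljau p r (j + 1) - deCasteljau p r j) +
        (deCasteljau p r (j + 2) - deCasteljau p r (j + 1))) := by
  simp only [deCasteljau]
  module

lemma norm_succ_sub_self (r j : ℕ) :
    ‖deCasteljau p (r + 1) j - deCasteljau p r j‖ =
      2⁻¹ * ‖deCasteljau p r (j + 1) - deCasteljau p r j‖ := by
  rw [← norm_smul_of_nonneg (by norm_num)]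
  simp only [deCasteljau]
  congr 1
  module

lemma norm_sub_succ (r j : ℕ) :
    ‖deCasteljau p r (j + 1) - deCasteljau p (r + 1) j‖ =
      2⁻¹ * ‖deCasteljau p r (j + 1) - deCasteljau p r j‖ := by
  rw [← norm_smul_of_nonneg (by norm_num)]
  simp only [deCasteljau]
  congr 1
  module

lemma norm_sub_le {M : ℝ} (r j : ℕ)
    (hM : ∀ i, j ≤ i → i ≤ j + r → ‖p (i + 1) - p i‖ ≤ M) :
    ‖deCasteljau p r (j + 1) - deCasteljau p r j‖ ≤ M := by
  induction r generalizing j with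
  | zero => exact hM j le_rfl le_rfl
  | succ r ih =>
    have left := ih j fun i hj hi => hM i hj (by omega)
    have right := ih (j + 1) fun i hj hi => hM i (by omega) (by omega)
    calc ‖deCasteljau p (r + 1) (j + 1) - deCasteljau p (r + 1) j‖
        ≤ 2⁻¹ * (‖deCasteljau p r (j + 1) - deCasteljau p r j‖ +
            ‖deCasteljau p r (j + 1 + 1) - deCasteljau p r (j + 1)‖) := by
          rw [succ_sub_succ, norm_smul_of_nonneg (by norm_num)]
          gcongr
          exact norm_add_le _ _
      _ ≤ M := by linarith

end deCasteljau

/-- Under de Casteljau subdivision at parameter `1/2`, the maximum distance between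
consecutive control points of either half (left half `j ↦ p^j_0`, right half
`j ↦ p^{n-j}_j`) is at most half the maximum edge length of the original polygon. -/
theorem deCasteljau_edge_length (n : ℕ) (hn : 1 ≤ n) (p : ℕ → EuclideanSpace ℝ (Fin 3)) :
    ((Finset.range n).sup' (Finset.nonempty_range_iff.mpr (by omega))
        (fun j => ‖deCasteljau p (j + 1) 0 - deCasteljau p j 0‖) ≤
      (1 / 2) * (Finset.range n).sup' (Finset.nonempty_range_iff.mpr (by omega))
        (fun j => ‖p (j + 1) - p j‖)) ∧
    ((Finset.range n).sup' (Finset.nonempty_range_iff.mpr (by omega))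
        (fun j => ‖deCasteljau p (n - (j + 1)) (j + 1) - deCasteljau p (n - j) j‖) ≤
      (1 / 2) * (Finset.range n).sup' (Finset.nonempty_range_iff.mpr (by omega))
        (fun j => ‖p (j + 1) - p j‖)) := by
  set M := (Finset.range n).sup' (Finset.nonempty_range_iff.mpr (by omega))
    (fun j => ‖p (j + 1) - p j‖)
  have hM (i : ℕ) (hi : i < n) : ‖p (i + 1) - p i‖ ≤ M :=
    Finset.le_sup' (fun j => ‖p (j + 1) - p j‖) (Finset.mem_range.mpr hi)
  constructor <;> refine Finset.sup'_le _ _ fun j hj => ?_ <;> rw [Finset.mem_range] at hj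
  · rw [deCasteljau.norm_succ_sub_self, one_div]
    gcongr
    exact deCasteljau.norm_sub_le p j 0 fun i _ hi => hM i (by omega)
  · rw [show n - j = n - (j + 1) + 1 by omega, deCasteljau.norm_sub_succ, one_div]
    gcongr
    exact deCasteljau.norm_sub_le p _ j fun i _ hi => hM i (by omega)
end
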